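/- arXiv:1907.05481 — 5 statements merged into one kernel-verified Lean document; each statement's English description precedes it below -/
import Mathlib

section
/- In a quantitative reachability game, if a play ρ contains an unnecessary cycle (i.e., ρₖ = ρₖ₊ℓ with ℓ ≥ 1 and the set of players having visited their target set within the prefix up to index k equals that up to index k+ℓ), then the play ρ' obtained by removing the cycle (ρ' = ρ₀…ρₖ ρₖ₊ℓ₊₁ ρₖ₊ℓ₊₂ …) satisfies Cost_i(ρ') ≤ Cost_i(ρ) for every player i. -/
open scoped Classical

structure Arena (V : Type) where
  E : V → V → Prop
  succ : ∀ v, ∃ w, E v w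

variable {V P : Type}

/-- An infinite play: consecutive vertices are connected by edges. -/
def IsPlay (A : Arena V) (ρ : ℕ → V) : Prop := ∀ k, A.E (ρ k) (ρ (k + 1))

/-- Cost: least index of a visit to `F`, or `⊤` if never visited. -/
noncomputable def cost (F : Set V) (ρ : ℕ → V) : ℕ∞ :=
  ⨅ (k : ℕ) (_ : ρ k ∈ F), (k : ℕ∞)

/-- Qualitative gain: `1` if the play visits `F`, else `0`. -/
noncomputable def gain (F : Set V) (ρ : ℕ → V) : ℕ :=
  if ∃ n, ρ n ∈ F then 1 else 0

/-- The set of players whose target set is visited along the play. -/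
def visit (F : P → Set V) (ρ : ℕ → V) : Set P := {i | ∃ n, ρ n ∈ F i}

/-- The set of players whose target set is visited within the prefix `ρ₀…ρₖ`. -/
def visitPrefix (F : P → Set V) (ρ : ℕ → V) (k : ℕ) : Set P := {i | ∃ n ≤ k, ρ n ∈ F i}

/-- A multiplayer reachability game: an arena, an owner for each vertex,
and a target set for each player. -/
structure Game (P V : Type) extends Arena V where
  owner : V → P
  F : P → Set V

/-- A strategy maps (past history, current vertex) to the next vertex. -/
abbrev Strat (V : Type) := List V → V → V

def IsStrategy (A : Arena V) (s : Strat V) : Prop := ∀ p v, A.E v (s p v)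

noncomputable def histStep (G : Game P V) (σ : P → Strat V) :
    List V × V → List V × V :=
  fun x => (x.1 ++ [x.2], σ (G.owner x.2) x.1 x.2)

/-- The unique play from `v0` consistent with the strategy profile `σ`. -/
noncomputable def outcome (G : Game P V) (σ : P → Strat V) (v0 : V) (k : ℕ) : V :=
  ((histStep G σ)^[k] ([], v0)).2

/-- Replace the strategy of player `i` by `s` in the profile `σ`. -/
noncomputable def updProfile (σ : P → Strat V) (i : P) (s : Strat V) : P → Strat V :=
  fun j => if j = i then s else σ j

/-- Nash equilibrium for the quantitative (cost-minimizing) semantics. -/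
def IsNE (G : Game P V) (σ : P → Strat V) (v0 : V) : Prop :=
  (∀ i, IsStrategy G.toArena (σ i)) ∧
  ∀ (i : P) (s : Strat V), IsStrategy G.toArena s →
    cost (G.F i) (outcome G σ v0) ≤ cost (G.F i) (outcome G (updProfile σ i s) v0)

/-- Nash equilibrium for the qualitative (gain-maximizing) semantics. -/
def IsNEqual (G : Game P V) (σ : P → Strat V) (v0 : V) : Prop :=
  (∀ i, IsStrategy G.toArena (σ i)) ∧
  ∀ (i : P) (s : Strat V), IsStrategy G.toArena s →
    gain (G.F i) (outcome G (updProfile σ i s) v0) ≤ gain (G.F i) (outcome G σ v0)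

/-- The profile in which player `i` plays `s` and all other players (the
coalition `-i`) jointly play `t`. -/
noncomputable def coalProfile (i : P) (s t : Strat V) : P → Strat V :=
  fun j => if j = i then s else t

/-- Value of the coalitional zero-sum game `G_i` from `v`: player `i`
minimizes the first hitting time of `F i` against the coalition. -/
noncomputable def val (G : Game P V) (i : P) (v : V) : ℕ∞ :=
  ⨅ s : {s : Strat V // IsStrategy G.toArena s},
    ⨆ t : {t : Strat V // IsStrategy G.toArena t},
      cost (G.F i) (outcome G (coalProfile i s.1 t.1) v)

/-- A positional (memoryless) strategy only depends on the current vertex. -/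
def Positional (s : Strat V) : Prop := ∀ p q v, s p v = s q v

/-- An optimal strategy for the minimizer (player `i`) in `G_i`. -/
def OptimalMin (G : Game P V) (i : P) (s : Strat V) : Prop :=
  IsStrategy G.toArena s ∧
  ∀ (v : V) (t : Strat V), IsStrategy G.toArena t →
    cost (G.F i) (outcome G (coalProfile i s t) v) ≤ val G i v

/-- An optimal strategy for the maximizer (the coalition `-i`) in `G_i`. -/
def OptimalMax (G : Game P V) (i : P) (t : Strat V) : Prop :=
  IsStrategy G.toArena t ∧
  ∀ (v : V) (s : Strat V), IsStrategy G.toArena s →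
    val G i v ≤ cost (G.F i) (outcome G (coalProfile i s t) v)

/-- `λ`-consistency of a play. -/
def lambdaConsistent (G : Game P V) (lam : V → ℕ∞) (ρ : ℕ → V) : Prop :=
  ∀ (i : P) (k : ℕ), G.owner (ρ k) = i → (∀ n ≤ k, ρ n ∉ G.F i) →
    cost (G.F i) (fun j => ρ (k + j)) ≤ lam (ρ k)

/-- A lasso `hℓ^ω` of length `|hℓ| ≤ L`. -/
def IsLasso (ρ : ℕ → V) (L : ℕ) : Prop :=
  ∃ n p, 0 < p ∧ n + p ≤ L ∧ ∀ k, n ≤ k → ρ (k + p) = ρ k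

/-- The play obtained by removing the cycle `ρₖ…ρₖ₊ₗ` from `ρ`. -/
def removeCycle (ρ : ℕ → V) (k l : ℕ) : ℕ → V :=
  fun j => if j ≤ k then ρ j else ρ (j + l)

/-- `ρₖ…ρₖ₊ₗ` is an unnecessary cycle: it is a (nontrivial) cycle inside of
which no new player visits his target set. -/
def UnnecessaryCycle (F : P → Set V) (ρ : ℕ → V) (k l : ℕ) : Prop :=
  0 < l ∧ ρ k = ρ (k + l) ∧ visitPrefix F ρ k = visitPrefix F ρ (k + l)

/-- The set of cost profiles of plays from `v0`. -/
def costProfiles (G : Game P V) (v0 : V) : Set (P → ℕ∞) :=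
  {c | ∃ ρ, IsPlay G.toArena ρ ∧ ρ 0 = v0 ∧ c = fun i => cost (G.F i) ρ}

/-- The set of gain profiles of plays from `v0`. -/
def gainProfiles (G : Game P V) (v0 : V) : Set (P → ℕ) :=
  {c | ∃ ρ, IsPlay G.toArena ρ ∧ ρ 0 = v0 ∧ c = fun i => gain (G.F i) ρ}

/-- Pareto optimality for cost profiles: minimal in the componentwise order. -/
def ParetoMinimal {α : Type} [Preorder α] (S : Set α) (p : α) : Prop :=
  p ∈ S ∧ ∀ q ∈ S, q ≤ p → q = p

/-- Pareto optimality for gain profiles: maximal in the componentwise order. -/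
def ParetoMaximal {α : Type} [Preorder α] (S : Set α) (p : α) : Prop :=
  p ∈ S ∧ ∀ q ∈ S, p ≤ q → q = p

/-- `h ++ [v]` is a history from `v0`: a finite path starting at `v0`
whose current (last) vertex is `v`; `h` is the strict past. -/
def IsHist (A : Arena V) (v0 : V) (h : List V) (v : V) : Prop :=
  (h ++ [v]).head? = some v0 ∧ List.Chain' A.E (h ++ [v])

/-- The strategy `s` shifted by the past history `h` (i.e. `s|h`). -/
noncomputable def shiftStrat (s : Strat V) (h : List V) : Strat V :=
  fun p v => s (h ++ p) v

/-- Gain of a play `ρ` in the subgame after past history `h`: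
`1` iff `h·ρ` visits `F`. -/
noncomputable def gainAfter (F : Set V) (h : List V) (ρ : ℕ → V) : ℕ :=
  if (∃ x ∈ h, x ∈ F) ∨ (∃ n, ρ n ∈ F) then 1 else 0

/-- Subgame perfect equilibrium for qualitative reachability games:
in every subgame after a history from `v0`, no player can strictly
increase his gain by a unilateral deviation. -/
def IsSPEqual (G : Game P V) (σ : P → Strat V) (v0 : V) : Prop :=
  (∀ i, IsStrategy G.toArena (σ i)) ∧
  ∀ (h : List V) (v : V), IsHist G.toArena v0 h v →
    ∀ (i : P) (s : Strat V), IsStrategy G.toArena s →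
      gainAfter (G.F i) h
          (outcome G (updProfile (fun j => shiftStrat (σ j) h) i s) v) ≤
        gainAfter (G.F i) h (outcome G (fun j => shiftStrat (σ j) h) v)

/-! A visit to `F` at index `n` of `ρ` survives in the shortened play at an index `≤ n`: before
the cycle nothing changes, after it every index drops by `l`, and a visit inside the cycle is
already matched by one in `ρ₀…ρₖ`, since the cycle adds no new player to `visitPrefix`. -/

lemma cost_le_cost_of_forall_exists_le {F : Set V} {ρ ρ' : ℕ → V}
    (h : ∀ n, ρ n ∈ F → ∃ m ≤ n, ρ' m ∈ F) : cost F ρ' ≤ cost F ρ :=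
  le_iInf₂ fun n hn => by
    obtain ⟨m, hm, hmF⟩ := h n hn
    exact (iInf₂_le m hmF).trans (by exact_mod_cast hm)

lemma removeCycle_of_le {ρ : ℕ → V} {k l j : ℕ} (hj : j ≤ k) : removeCycle ρ k l j = ρ j :=
  if_pos hj

lemma removeCycle_sub {ρ : ℕ → V} {k l n : ℕ} (hn : k + l < n) :
    removeCycle ρ k l (n - l) = ρ n := by
  rw [removeCycle, if_neg (by omega), Nat.sub_add_cancel (by omega)]

lemma exists_le_removeCycle_mem {F : Set V} {ρ : ℕ → V} {k l n : ℕ}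
    (hcycle : (∃ m ≤ k + l, ρ m ∈ F) → ∃ m ≤ k, ρ m ∈ F) (hn : ρ n ∈ F) :
    ∃ m ≤ n, removeCycle ρ k l m ∈ F := by
  rcases le_or_gt n k with hnk | hkn
  · exact ⟨n, le_rfl, by rwa [removeCycle_of_le hnk]⟩
  rcases le_or_gt n (k + l) with hnkl | hkln
  · obtain ⟨m, hmk, hmF⟩ := hcycle ⟨n, hnkl, hn⟩
    exact ⟨m, by omega, by rwa [removeCycle_of_le hmk]⟩
  · exact ⟨n - l, Nat.sub_le n l, by rwa [removeCycle_sub hkln]⟩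

theorem stmt1_general {V P : Type} (G : Game P V) (ρ : ℕ → V)
    (k l : ℕ)
    (hcyc : UnnecessaryCycle G.F ρ k l) :
    ∀ i : P, cost (G.F i) (removeCycle ρ k l) ≤ cost (G.F i) ρ := by
  obtain ⟨-, -, hvisit⟩ := hcyc
  intro i
  refine cost_le_cost_of_forall_exists_le fun n hn => exists_le_removeCycle_mem ?_ hn
  exact fun hi => (hvisit ▸ hi : i ∈ visitPrefix G.F ρ k)

/-- removing an unnecessary cycle does not increase any cost. -/
theorem stmt1 {V P : Type} [Fintype V] [Fintype P] (G : Game P V) (ρ : ℕ → V)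
    (hρ : IsPlay G.toArena ρ) (k l : ℕ)
    (hcyc : UnnecessaryCycle G.F ρ k l) :
    ∀ i : P, cost (G.F i) (removeCycle ρ k l) ≤ cost (G.F i) ρ :=
  stmt1_general G ρ k l hcyc
end

section
/- In a quantitative reachability game, if σ is a Nash equilibrium from v₀, then for every player i and every index k such that ρₖ ∈ V_i and player i has not visited F_i within ρ₀…ρₖ (where ρ is the outcome of σ), it holds that Cost_i(ρ_{≥k}) ≤ Val_i(ρₖ), where Val_i(v) is the value of the two-player zero-sum coalitional game in which player i (minimizer) plays against the coalition of all other players (maximizer) with payoff the number of steps to reach F_i. -/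
open scoped Classical

variable {V P : Type}

/-!
Let `ρ` be the outcome of the equilibrium and suppose player `i` has not reached `F i` by step
`k`. Player `i` may follow `σ i` up to step `k` and then switch to a strategy realising the
value of the coalitional game from `ρₖ`: the play is unchanged up to step `k`, and afterwards
it is a play of the coalitional game from `ρₖ` in which the coalition simulates `σ` after the
history `ρ₀…ρₖ₋₁`. So this deviation reaches `F i` within `k + Val_i(ρₖ)` steps, while the
equilibrium outcome reaches it exactly at `k + Cost_i(ρ_{≥k})`. A value-realising strategy
exists because infima in `ℕ∞` are attained.
-/

lemma cost_le_of_mem {F : Set V} {ρ : ℕ → V} {n : ℕ} (h : ρ n ∈ F) : cost F ρ ≤ n :=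
  iInf₂_le n h

lemma cost_eq_add_cost_shift {F : Set V} {ρ : ℕ → V} {k : ℕ} (hF : ∀ n < k, ρ n ∉ F) :
    cost F ρ = k + cost F (fun j => ρ (k + j)) := by
  apply le_antisymm
  · simp only [cost, ENat.add_iInf]
    refine le_iInf₂ fun j hj => ?_
    exact_mod_cast cost_le_of_mem hj
  · refine le_iInf₂ fun m hm => ?_
    obtain ⟨j, rfl⟩ : ∃ j, m = k + j :=
      Nat.exists_eq_add_of_le (not_lt.1 fun hmk => hF m hmk hm)
    push_cast
    exact add_le_add_right (cost_le_of_mem (ρ := fun j => ρ (k + j)) hm) _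

section Outcome

variable (G : Game P V)

lemma histStep_iterate (σ : P → Strat V) (v0 : V) (n : ℕ) :
    (histStep G σ)^[n] ([], v0) =
      ((List.range n).map (outcome G σ v0), outcome G σ v0 n) := by
  induction n with
  | zero => simp [outcome]
  | succ n ih =>
    have hnext : outcome G σ v0 (n + 1) =
        σ (G.owner (outcome G σ v0 n)) ((List.range n).map (outcome G σ v0))
          (outcome G σ v0 n) := by
      rw [outcome, Function.iterate_succ_apply', ih]
      rfl
    rw [Function.iterate_succ_apply', ih, hnext]
    simp [histStep, List.range_succ]

lemma outcome_congr {σ τ : P → Strat V} (h : ∀ L v, σ (G.owner v) L v = τ (G.owner v) L v)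
    (v0 : V) : outcome G σ v0 = outcome G τ v0 := by
  have : histStep G σ = histStep G τ := funext fun x => by simp only [histStep, h]
  funext n
  simp only [outcome, this]

lemma outcome_eq_of_forall_length_lt {σ τ : P → Strat V} {k : ℕ}
    (h : ∀ p L v, L.length < k → σ p L v = τ p L v) (v0 : V) {n : ℕ} (hn : n ≤ k) :
    outcome G σ v0 n = outcome G τ v0 n := by
  suffices (histStep G σ)^[n] ([], v0) = (histStep G τ)^[n] ([], v0) by
    simp only [outcome, this]
  induction n with
  | zero => rfl
  | succ n ih =>
    rw [Function.iterate_succ_apply', Function.iterate_succ_apply', ih (by omega),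
      histStep_iterate]
    simp only [histStep]
    rw [h _ _ _ (by simp only [List.length_map, List.length_range]; omega)]

lemma outcome_add (σ : P → Strat V) (v0 : V) (k j : ℕ) :
    outcome G σ v0 (k + j) =
      outcome G (fun p => shiftStrat (σ p) ((List.range k).map (outcome G σ v0)))
        (outcome G σ v0 k) j := by
  set H := (List.range k).map (outcome G σ v0)
  set τ : P → Strat V := fun p => shiftStrat (σ p) H
  suffices (histStep G σ)^[k + j] ([], v0) =
      (H ++ ((histStep G τ)^[j] ([], outcome G σ v0 k)).1,
        ((histStep G τ)^[j] ([], outcome G σ v0 k)).2) by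
    simp only [outcome, this]
  induction j with
  | zero =>
    simp only [add_zero, histStep_iterate, List.range_zero, List.map_nil, List.append_nil, H]
    rfl
  | succ j ih =>
    rw [← Nat.add_assoc, Function.iterate_succ_apply', ih, Function.iterate_succ_apply']
    simp [histStep, τ, shiftStrat]

end Outcome

/-- Follow `s` during the first `k` steps, then play `s'` as if the game started at step `k`. -/
def switchAfter (s : Strat V) (k : ℕ) (s' : Strat V) : Strat V :=
  fun L v => if L.length < k then s L v else s' (L.drop k) v

def coalitionAfter (G : Game P V) (σ : P → Strat V) (H : List V) : Strat V :=
  fun L v => σ (G.owner v) (H ++ L) v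

lemma IsStrategy.switchAfter {A : Arena V} {s s' : Strat V} (hs : IsStrategy A s)
    (hs' : IsStrategy A s') (k : ℕ) : IsStrategy A (switchAfter s k s') := fun L v => by
  unfold _root_.switchAfter
  split_ifs
  exacts [hs L v, hs' _ v]

lemma isStrategy_coalitionAfter (G : Game P V) {σ : P → Strat V}
    (hσ : ∀ p, IsStrategy G.toArena (σ p)) (H : List V) :
    IsStrategy G.toArena (coalitionAfter G σ H) :=
  fun _ v => hσ _ _ v

section Deviation

variable (G : Game P V) (σ : P → Strat V) (i : P) (k : ℕ) (s : Strat V) (v0 : V)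

lemma outcome_updProfile_switchAfter_of_le {n : ℕ} (hn : n ≤ k) :
    outcome G (updProfile σ i (switchAfter (σ i) k s)) v0 n = outcome G σ v0 n := by
  refine outcome_eq_of_forall_length_lt G (fun p L v hL => ?_) v0 hn
  unfold updProfile
  split_ifs with hp
  · simp [switchAfter, hL, hp]
  · rfl

lemma outcome_updProfile_switchAfter_add (j : ℕ) :
    outcome G (updProfile σ i (switchAfter (σ i) k s)) v0 (k + j) =
      outcome G (coalProfile i s (coalitionAfter G σ ((List.range k).map (outcome G σ v0))))
        (outcome G σ v0 k) j := by
  have hprefix : (List.range k).map (outcome G (updProfile σ i (switchAfter (σ i) k s)) v0) =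
      (List.range k).map (outcome G σ v0) :=
    List.map_congr_left fun m hm =>
      outcome_updProfile_switchAfter_of_le G σ i k s v0 (List.mem_range.1 hm).le
  rw [outcome_add, hprefix, outcome_updProfile_switchAfter_of_le G σ i k s v0 le_rfl]
  refine congrFun (outcome_congr G (fun L v => ?_) _) j
  by_cases hv : G.owner v = i
  · simp [hv, updProfile, coalProfile, shiftStrat, switchAfter]
  · simp [hv, updProfile, coalProfile, shiftStrat, coalitionAfter]

end Deviation

lemma exists_isStrategy_forall_cost_le_val (G : Game P V) (i : P) (v : V) :
    ∃ s, IsStrategy G.toArena s ∧ ∀ t, IsStrategy G.toArena t →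
      cost (G.F i) (outcome G (coalProfile i s t) v) ≤ val G i v := by
  have : Nonempty {s : Strat V // IsStrategy G.toArena s} :=
    ⟨⟨fun _ v => (G.succ v).choose, fun _ v => (G.succ v).choose_spec⟩⟩
  obtain ⟨⟨s, hs⟩, hval⟩ := ciInf_mem fun s : {s : Strat V // IsStrategy G.toArena s} =>
    ⨆ t : {t : Strat V // IsStrategy G.toArena t},
      cost (G.F i) (outcome G (coalProfile i s.1 t.1) v)
  refine ⟨s, hs, fun t ht => ?_⟩
  rw [val, ← hval]
  exact le_iSup (fun t : {t : Strat V // IsStrategy G.toArena t} =>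
    cost (G.F i) (outcome G (coalProfile i s t.1) v)) ⟨t, ht⟩

theorem stmt5_general {V P : Type} (G : Game P V) (v0 : V)
    (σ : P → Strat V) (hNE : IsNE G σ v0)
    (i : P) (k : ℕ)
    (hnotvis : ∀ n ≤ k, outcome G σ v0 n ∉ G.F i) :
    cost (G.F i) (fun j => outcome G σ v0 (k + j)) ≤ val G i (outcome G σ v0 k) := by
  obtain ⟨s, hs, hsval⟩ := exists_isStrategy_forall_cost_le_val G i (outcome G σ v0 k)
  have hdev := hNE.2 i (switchAfter (σ i) k s) ((hNE.1 i).switchAfter hs k)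
  have hdev_notvis : ∀ n < k,
      outcome G (updProfile σ i (switchAfter (σ i) k s)) v0 n ∉ G.F i := fun n hn => by
    rw [outcome_updProfile_switchAfter_of_le G σ i k s v0 hn.le]
    exact hnotvis n hn.le
  rw [cost_eq_add_cost_shift fun n hn => hnotvis n hn.le, cost_eq_add_cost_shift hdev_notvis]
    at hdev
  simp only [outcome_updProfile_switchAfter_add] at hdev
  rw [← ENat.add_le_add_iff_left (ENat.natCast_ne_top k)]
  exact hdev.trans (add_le_add_right (hsval _ (isStrategy_coalitionAfter G hNE.1 _)) _)

/-- the outcome of a Nash equilibrium is Val-consistent. -/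
theorem stmt5 {V P : Type} [Fintype V] [Fintype P] (G : Game P V) (v0 : V)
    (hdet : ∀ i : P, (∃ s, Positional s ∧ OptimalMin G i s) ∧
      (∃ t, Positional t ∧ OptimalMax G i t))
    (σ : P → Strat V) (hNE : IsNE G σ v0)
    (i : P) (k : ℕ)
    (hown : G.owner (outcome G σ v0 k) = i)
    (hnotvis : ∀ n ≤ k, outcome G σ v0 n ∉ G.F i) :
    cost (G.F i) (fun j => outcome G σ v0 (k + j)) ≤ val G i (outcome G σ v0 k) :=
  stmt5_general G v0 σ hNE i k hnotvis
end

section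
/- There exists a two-player initialized quantitative reachability game (G, v₀) that has no Nash equilibrium whose cost profile is Pareto optimal among the cost profiles of all plays from v₀. -/
open scoped Classical

variable {V P : Type}

/-!
Player 2 can reach `v1` at step 3 on his own, so in a Nash equilibrium his cost is at most 3 and
the outcome starts with `v0 a₁ a₂ v1` or with `v0 v2 b₁ v4`. In the second case Player 1 profits
by moving from `v2` to `v3`, reaching `F₁` at step 2 instead of 3. In the first case Player 1's
cost is at least 4, so the cost profile is strictly dominated by the profile `(3, 3)` of
`v0 v2 b₁ v4 ⋯`.
-/

section Outcome

variable (G : Game P V) (σ : P → Strat V) (v0 : V)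

theorem outcome_succ (k : ℕ) :
    outcome G σ v0 (k + 1) =
      σ (G.owner (outcome G σ v0 k)) ((histStep G σ)^[k] ([], v0)).1 (outcome G σ v0 k) := by
  rw [outcome, Function.iterate_succ_apply']
  rfl

@[simp]
theorem outcome_zero : outcome G σ v0 0 = v0 := rfl

theorem outcome_one : outcome G σ v0 1 = σ (G.owner v0) [] v0 :=
  outcome_succ G σ v0 0

theorem isPlay_outcome (hσ : ∀ i, IsStrategy G.toArena (σ i)) :
    IsPlay G.toArena (outcome G σ v0) := fun k => by
  rw [outcome_succ]
  exact hσ _ _ _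

end Outcome

section UpdProfile

variable (σ : P → Strat V) (i : P) (s : Strat V)

@[simp]
theorem updProfile_self : updProfile σ i s i = s := if_pos rfl

theorem updProfile_of_ne {j : P} (h : j ≠ i) : updProfile σ i s j = σ j := if_neg h

theorem isStrategy_updProfile {A : Arena V} (hσ : ∀ j, IsStrategy A (σ j)) (hs : IsStrategy A s) :
    ∀ j, IsStrategy A (updProfile σ i s j) := fun j => by
  by_cases h : j = i
  · rwa [h, updProfile_self]
  · rw [updProfile_of_ne σ i s h]
    exact hσ j

end UpdProfile

theorem coe_le_cost_iff {F : Set V} {ρ : ℕ → V} {n : ℕ} :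
    (n : ℕ∞) ≤ cost F ρ ↔ ∀ k < n, ρ k ∉ F := by
  simp only [cost, le_iInf_iff, Nat.cast_le]
  exact ⟨fun h k hk hkF => absurd (h k hkF) (by omega),
    fun h k hkF => by by_contra! hlt; exact h k hlt hkF⟩

theorem cost_le_coe_iff {F : Set V} {ρ : ℕ → V} {n : ℕ} :
    cost F ρ ≤ n ↔ ∃ k ≤ n, ρ k ∈ F := by
  rw [← not_lt, ← ENat.add_one_le_iff (ENat.natCast_ne_top n), ← Nat.cast_succ, coe_le_cost_iff]
  simp only [Nat.lt_succ_iff, not_forall, not_not, exists_prop]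

theorem ParetoMinimal.not_lt {α : Type} [Preorder α] {S : Set α} {p q : α}
    (hp : ParetoMinimal S p) (hq : q ∈ S) : ¬ q < p := fun hlt =>
  hlt.ne (hp.2 q hq hlt.le)

/-- `a₁ a₂` subdivide the edge `v0 → v1` into a path of length 3, and `b₁` the edge `v2 → v4`. -/
inductive Vtx
  | v0 | a₁ | a₂ | v1 | v2 | v3 | b₁ | v4
  deriving DecidableEq

namespace Vtx

instance : Fintype Vtx :=
  Fintype.ofList [v0, a₁, a₂, v1, v2, v3, b₁, v4] fun v => by cases v <;> simp

def succs : Vtx → List Vtx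
  | v0 => [a₁, v2]
  | a₁ => [a₂]
  | a₂ => [v1]
  | v1 => [v0]
  | v2 => [v3, b₁]
  | v3 => [v0]
  | b₁ => [v4]
  | v4 => [v0]

theorem succs_ne_nil : ∀ v : Vtx, v.succs ≠ [] := by decide

def first (v : Vtx) : Vtx := v.succs.head (succs_ne_nil v)

def last (v : Vtx) : Vtx := v.succs.getLast (succs_ne_nil v)

end Vtx

open Vtx

/-- Player 1 is `0 : Fin 2` and Player 2 is `1`. -/
def witnessGame : Game (Fin 2) Vtx where
  E v w := w ∈ v.succs
  succ v := ⟨v.first, List.head_mem _⟩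
  owner v := if v = v0 then 1 else 0
  F := ![{v3, v4}, {v1, v4}]

@[simp]
theorem witnessGame_owner (v : Vtx) : witnessGame.owner v = if v = v0 then 1 else 0 := rfl

@[simp]
theorem witnessGame_F_zero : witnessGame.F 0 = {v3, v4} := rfl

@[simp]
theorem witnessGame_F_one : witnessGame.F 1 = {v1, v4} := rfl

theorem isStrategy_first : IsStrategy witnessGame.toArena fun _ v => v.first :=
  fun _ v => List.head_mem (succs_ne_nil v)

theorem isPlay_iterate_last : IsPlay witnessGame.toArena fun k => last^[k] v0 := fun k => by
  show last^[k + 1] v0 ∈ (last^[k] v0).succs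
  rw [Function.iterate_succ_apply']
  exact List.getLast_mem (succs_ne_nil _)

theorem iterate_last_three : last^[3] v0 = v4 := rfl

theorem witness_play_prefix {ρ : ℕ → Vtx} (hρ : IsPlay witnessGame.toArena ρ) (h0 : ρ 0 = v0) :
    (ρ 1 = a₁ ∧ ρ 2 = a₂ ∧ ρ 3 = v1) ∨ (ρ 1 = v2 ∧ ρ 2 = v3 ∧ ρ 3 = v0) ∨
      (ρ 1 = v2 ∧ ρ 2 = b₁ ∧ ρ 3 = v4) := by
  have paths : ∀ x y z : Vtx, x ∈ v0.succs → y ∈ x.succs → z ∈ y.succs →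
      (x = a₁ ∧ y = a₂ ∧ z = v1) ∨ (x = v2 ∧ y = v3 ∧ z = v0) ∨ (x = v2 ∧ y = b₁ ∧ z = v4) := by
    decide
  exact paths _ _ _ (h0 ▸ hρ 0) (hρ 1) (hρ 2)

theorem cost_one_le_three_of_isNE {σ : Fin 2 → Strat Vtx} (hσ : IsNE witnessGame σ v0) :
    cost (witnessGame.F 1) (outcome witnessGame σ v0) ≤ 3 := by
  set τ := updProfile σ 1 fun _ v => v.first
  have hτ : IsPlay witnessGame.toArena (outcome witnessGame τ v0) :=
    isPlay_outcome _ _ _ (isStrategy_updProfile σ 1 _ hσ.1 isStrategy_first)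
  have hτ1 : outcome witnessGame τ v0 1 = a₁ := by
    simp [τ, outcome_one, first, succs]
  have hτ3 : outcome witnessGame τ v0 3 = v1 := by
    rcases witness_play_prefix hτ rfl with h | h | h <;> simp_all
  have hdev : cost (witnessGame.F 1) (outcome witnessGame τ v0) ≤ 3 :=
    cost_le_coe_iff.2 ⟨3, le_rfl, by simp [hτ3]⟩
  exact (hσ.2 1 _ isStrategy_first).trans hdev

theorem outcome_two_ne_b₁_of_isNE {σ : Fin 2 → Strat Vtx} (hσ : IsNE witnessGame σ v0)
    (h1 : outcome witnessGame σ v0 1 = v2) : outcome witnessGame σ v0 2 ≠ b₁ := by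
  intro h2
  set τ := updProfile σ 0 fun _ v => v.first
  have hτ1 : outcome witnessGame τ v0 1 = v2 := by
    rw [← h1]
    simp [τ, outcome_one, updProfile_of_ne]
  have hτ2 : outcome witnessGame τ v0 2 = v3 := by
    rw [outcome_succ, hτ1]
    simp [τ, first, succs]
  have hdev : cost (witnessGame.F 0) (outcome witnessGame τ v0) ≤ 2 :=
    cost_le_coe_iff.2 ⟨2, le_rfl, by simp [hτ2]⟩
  have hρ : 3 ≤ cost (witnessGame.F 0) (outcome witnessGame σ v0) :=
    coe_le_cost_iff.2 fun k hk => by interval_cases k <;> simp [h1, h2]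
  have := (hρ.trans (hσ.2 0 _ isStrategy_first)).trans hdev
  norm_num at this

theorem outcome_prefix_of_isNE {σ : Fin 2 → Strat Vtx} (hσ : IsNE witnessGame σ v0) :
    outcome witnessGame σ v0 1 = a₁ ∧ outcome witnessGame σ v0 2 = a₂ ∧
      outcome witnessGame σ v0 3 = v1 := by
  obtain ⟨k, hk, hkF⟩ := cost_le_coe_iff.1 (cost_one_le_three_of_isNE hσ)
  rcases witness_play_prefix (isPlay_outcome _ _ _ hσ.1) rfl with h | ⟨h1, h2, h3⟩ | ⟨h1, h2, -⟩
  · exact h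
  · interval_cases k <;> simp [h1, h2, h3] at hkF
  · exact absurd h2 (outcome_two_ne_b₁_of_isNE hσ h1)

theorem not_paretoMinimal_of_prefix_v1 {ρ : ℕ → Vtx} (h0 : ρ 0 = v0) (h1 : ρ 1 = a₁)
    (h2 : ρ 2 = a₂) (h3 : ρ 3 = v1) :
    ¬ ParetoMinimal (costProfiles witnessGame v0) fun i => cost (witnessGame.F i) ρ := by
  intro hρ
  have hcycle : ∀ i, cost (witnessGame.F i) (fun k => last^[k] v0) ≤ 3 := fun i =>
    cost_le_coe_iff.2 ⟨3, le_rfl, by fin_cases i <;> simp [iterate_last_three]⟩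
  have hρ0 : 4 ≤ cost (witnessGame.F 0) ρ :=
    coe_le_cost_iff.2 fun k hk => by interval_cases k <;> simp [h0, h1, h2, h3]
  have hρ1 : 3 ≤ cost (witnessGame.F 1) ρ :=
    coe_le_cost_iff.2 fun k hk => by interval_cases k <;> simp [h0, h1, h2]
  refine hρ.not_lt ⟨_, isPlay_iterate_last, rfl, rfl⟩ (Pi.lt_def.2 ⟨fun i => ?_, 0, ?_⟩)
  · fin_cases i
    exacts [(hcycle 0).trans (le_trans (by norm_num) hρ0), (hcycle 1).trans hρ1]
  · exact (hcycle 0).trans_lt (lt_of_lt_of_le (by norm_num) hρ0)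

/-- there is a two-player quantitative reachability game with no
Nash equilibrium whose cost profile is Pareto optimal. -/
theorem stmt8 :
    ∃ (V : Type) (_ : Fintype V) (G : Game (Fin 2) V) (v0 : V),
      ∀ σ : Fin 2 → Strat V, IsNE G σ v0 →
        ¬ ParetoMinimal (costProfiles G v0)
            (fun i => cost (G.F i) (outcome G σ v0)) := by
  refine ⟨Vtx, inferInstance, witnessGame, v0, fun σ hσ => ?_⟩
  obtain ⟨h1, h2, h3⟩ := outcome_prefix_of_isNE hσ
  exact not_paretoMinimal_of_prefix_v1 rfl h1 h2 h3
end

section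
/- Let (G, v₀) be an initialized quantitative reachability game and let G' be the qualitative reachability game on the same arena with the same target sets (Gain_i(ρ) = 1 if ρ visits F_i, else 0, and players maximize gains). If σ is a Nash equilibrium in (G, v₀) (for the cost/minimization semantics), then σ is a Nash equilibrium in (G', v₀) (for the gain/maximization semantics). -/
open scoped Classical

variable {V P : Type}

theorem cost_lt_top_iff (F : Set V) (ρ : ℕ → V) : cost F ρ < ⊤ ↔ ∃ n, ρ n ∈ F := by
  simp only [cost, iInf_lt_top, exists_prop, ENat.natCast_lt_top, and_true]

theorem gain_le_gain_of_cost_le {F : Set V} {ρ ρ' : ℕ → V} (h : cost F ρ ≤ cost F ρ') :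
    gain F ρ' ≤ gain F ρ := by
  by_cases hρ' : ∃ n, ρ' n ∈ F
  · have hρ : ∃ n, ρ n ∈ F :=
      (cost_lt_top_iff F ρ).1 (h.trans_lt ((cost_lt_top_iff F ρ').2 hρ'))
    simp only [gain, if_pos hρ, if_pos hρ', le_refl]
  · simp only [gain, if_neg hρ', zero_le]

/-- a Nash equilibrium of the quantitative game is a Nash
equilibrium of the qualitative game on the same arena and target sets. -/
theorem stmt10 {V P : Type} (G : Game P V) (v0 : V) (σ : P → Strat V)
    (h : IsNE G σ v0) : IsNEqual G σ v0 :=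
  ⟨h.1, fun i s hs => gain_le_gain_of_cost_le (h.2 i s hs)⟩
end

section
/- In a quantitative reachability game, for every play ρ there is a lasso ρ' = hℓ^ω of length at most (|Π|+1)·|V| such that Visit(ρ') = Visit(ρ), obtained by iteratively removing unnecessary cycles and then winding into a lasso; moreover if ρ is λ-consistent for a labeling λ, then ρ' is λ-consistent. -/
open scoped Classical

variable {V P : Type}

/-!
Call `τ` a shortcut of `σ` if `τ` follows `σ` through a reindexing that only skips stretches in
which no new target is visited. Shortcuts keep the initial vertex, the set of visited targets and
`λ`-consistency; removing an unnecessary cycle gives one, and so does winding the play into a lasso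
on a cycle that starts after the last visit. Among the shortcuts of `ρ` take one whose visits all
happen by the least possible horizon `M`. By pigeonhole on (vertex, number of targets visited so
far) it has an unnecessary cycle ending within `(|Π|+1)·|V|` steps; by minimality of `M` that cycle
ends after `M`, so no new target is visited from its start on, and winding on it gives the lasso.
-/

/-- `τ` is a shortcut of `σ` along a reindexing `f`: from every position `j`, within `n` further
steps `τ` has visited every target that `σ` has visited within `n` steps from `f j`. -/
def IsShortcut (F : P → Set V) (σ τ : ℕ → V) : Prop :=
  ∃ f : ℕ → ℕ, f 0 = 0 ∧ (∀ j, τ j = σ (f j)) ∧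
    ∀ j n, visitPrefix F σ (f j + n) ⊆ visitPrefix F τ (j + n)

/-- The lasso `σ₀ … σₖ₋₁ (σₖ … σₖ₊ₗ₋₁)^ω`. -/
def windCycle (σ : ℕ → V) (k l : ℕ) : ℕ → V :=
  fun j => if j < k then σ j else σ (k + (j - k) % l)

section Cost

variable {F : Set V} {σ τ : ℕ → V}

lemma cost_le_of_mem_s11 {k : ℕ} (h : σ k ∈ F) : cost F σ ≤ k :=
  iInf₂_le k h

lemma cost_le_cost (h : ∀ n, σ n ∈ F → ∃ m ≤ n, τ m ∈ F) : cost F τ ≤ cost F σ :=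
  le_iInf₂ fun n hn => by
    obtain ⟨m, hmn, hm⟩ := h n hn
    exact (cost_le_of_mem_s11 hm).trans (Nat.cast_le.2 hmn)

end Cost

lemma visitPrefix_mono (F : P → Set V) (σ : ℕ → V) : Monotone (visitPrefix F σ) :=
  fun _ _ hjk _ ⟨n, hn, hmem⟩ => ⟨n, hn.trans hjk, hmem⟩

lemma visitPrefix_subset_visit (F : P → Set V) (σ : ℕ → V) (k : ℕ) :
    visitPrefix F σ k ⊆ visit F σ :=
  fun _ ⟨n, _, hmem⟩ => ⟨n, hmem⟩

lemma visitPrefix_congr {F : P → Set V} {σ τ : ℕ → V} {k : ℕ} (h : ∀ n ≤ k, τ n = σ n) :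
    visitPrefix F τ k = visitPrefix F σ k := by
  ext i
  exact exists_congr fun n => and_congr_right fun hn => by rw [h n hn]

lemma exists_visit_subset_visitPrefix [Finite P] (F : P → Set V) (σ : ℕ → V) :
    ∃ M, visit F σ ⊆ visitPrefix F σ M := by
  let first (i : P) : ℕ := if h : ∃ n, σ n ∈ F i then h.choose else 0
  obtain ⟨M, hM⟩ := (Set.finite_range first).bddAbove
  refine ⟨M, fun i (hi : ∃ n, σ n ∈ F i) => ⟨first i, hM ⟨i, rfl⟩, ?_⟩⟩
  simp only [first, dif_pos hi]
  exact hi.choose_spec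

/-- Pigeonhole on the pairs `(σ j, |visitPrefix F σ j|)`: along a monotone chain of subsets of
`P`, equal cardinalities force equal sets. -/
lemma exists_unnecessaryCycle_le [Fintype V] [Fintype P] (F : P → Set V) (σ : ℕ → V) :
    ∃ k l, k + l ≤ (Fintype.card P + 1) * Fintype.card V ∧ UnnecessaryCycle F σ k l := by
  set N := (Fintype.card P + 1) * Fintype.card V
  have hcard : ((Finset.univ : Finset V) ×ˢ Finset.range (Fintype.card P + 1)).card <
      (Finset.range (N + 1)).card := by
    simp [N, mul_comm]
  have hmaps : ∀ j ∈ Finset.range (N + 1), (σ j, (visitPrefix F σ j).ncard) ∈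
      (Finset.univ : Finset V) ×ˢ Finset.range (Fintype.card P + 1) := fun j _ => by
    simpa [Nat.lt_succ_iff] using
      (Set.ncard_le_card (visitPrefix F σ j)).trans_eq Nat.card_eq_fintype_card
  obtain ⟨a, ha, b, hb, hne, heq⟩ := Finset.exists_ne_map_eq_of_card_lt_of_maps_to hcard hmaps
  wlog hab : a < b generalizing a b
  · exact this b hb a ha hne.symm heq.symm (by omega)
  rw [Finset.mem_range] at hb
  obtain ⟨hσ, hcard⟩ := Prod.mk.inj heq
  refine ⟨a, b - a, by omega, by omega, ?_, ?_⟩ <;> rw [Nat.add_sub_cancel' hab.le]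
  · exact hσ
  · exact Set.eq_of_subset_of_ncard_le (visitPrefix_mono F σ hab.le) hcard.ge (Set.toFinite _)

namespace IsShortcut

variable {F : P → Set V} {ρ σ τ : ℕ → V}

lemma refl (F : P → Set V) (σ : ℕ → V) : IsShortcut F σ σ :=
  ⟨id, rfl, fun _ => rfl, fun _ _ => le_rfl⟩

lemma trans (hρσ : IsShortcut F ρ σ) (hστ : IsShortcut F σ τ) : IsShortcut F ρ τ := by
  obtain ⟨f, hf0, hf, hfv⟩ := hρσ
  obtain ⟨g, hg0, hg, hgv⟩ := hστ
  exact ⟨f ∘ g, by simp [hf0, hg0], fun j => (hg j).trans (hf (g j)),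
    fun j n => (hfv (g j) n).trans (hgv j n)⟩

lemma apply_zero (h : IsShortcut F σ τ) : τ 0 = σ 0 := by
  obtain ⟨f, hf0, hf, -⟩ := h
  rw [hf, hf0]

lemma visit_eq (h : IsShortcut F σ τ) : visit F τ = visit F σ := by
  obtain ⟨f, -, hf, hfv⟩ := h
  refine Set.Subset.antisymm (fun i ⟨n, hn⟩ => ⟨f n, hf n ▸ hn⟩) fun i ⟨n, hn⟩ => ?_
  have : i ∈ visitPrefix F σ (f 0 + n) := ⟨n, by omega, hn⟩
  exact visitPrefix_subset_visit F τ _ (hfv 0 n this)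

/-- A target not yet reached by `τ` at time `j` is reached by `τ` from `j` no later than by `σ`
from `f j`. -/
lemma lambdaConsistent {G : Game P V} {lam : V → ℕ∞} (h : IsShortcut G.F σ τ)
    (hσ : lambdaConsistent G lam σ) : lambdaConsistent G lam τ := by
  obtain ⟨f, -, hf, hfv⟩ := h
  intro i k hown hnot
  have hnotσ : ∀ n ≤ f k, σ n ∉ G.F i := fun n hn hmem => by
    obtain ⟨m, hm, hmem'⟩ := hfv k 0 ⟨n, hn, hmem⟩
    exact hnot m hm hmem'
  refine le_trans (cost_le_cost fun n hn => ?_) ((hf k).symm ▸ hσ i (f k) (hf k ▸ hown) hnotσ)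
  obtain ⟨m, hm, hmem⟩ := hfv k n ⟨f k + n, le_rfl, hn⟩
  have hkm : k < m := by
    by_contra! hmk
    exact hnot m hmk hmem
  exact ⟨m - k, by omega, by rwa [Nat.add_sub_cancel' hkm.le]⟩

end IsShortcut

section RemoveCycle

variable {F : P → Set V} {σ : ℕ → V} {k l : ℕ}

lemma isPlay_removeCycle {A : Arena V} (hσ : IsPlay A σ) (hkl : σ k = σ (k + l)) :
    IsPlay A (removeCycle σ k l) := by
  intro j
  unfold removeCycle
  rcases lt_or_ge j k with hjk | hkj
  · rw [if_pos hjk.le, if_pos (Nat.succ_le_of_lt hjk)]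
    exact hσ j
  · rw [if_neg (show ¬ j + 1 ≤ k by omega), show j + 1 + l = j + l + 1 by omega]
    split_ifs with hjk
    · rw [show j = k by omega, hkl]
      exact hσ (k + l)
    · exact hσ (j + l)

lemma visitPrefix_removeCycle (h : UnnecessaryCycle F σ k l) {j : ℕ} (hkj : k ≤ j) :
    visitPrefix F (removeCycle σ k l) j = visitPrefix F σ (j + l) := by
  obtain ⟨-, -, hvis⟩ := h
  ext i
  constructor
  · rintro ⟨n, hn, hmem⟩
    unfold removeCycle at hmem
    split_ifs at hmem
    · exact ⟨n, by omega, hmem⟩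
    · exact ⟨n + l, by omega, hmem⟩
  · rintro ⟨n, hn, hmem⟩
    by_cases hnk : n ≤ k + l
    · obtain ⟨m, hm, hmem'⟩ : i ∈ visitPrefix F σ k := hvis ▸ ⟨n, hnk, hmem⟩
      exact ⟨m, by omega, by simpa [removeCycle, hm] using hmem'⟩
    · refine ⟨n - l, by omega, ?_⟩
      simpa [removeCycle, show ¬ n - l ≤ k by omega, show n - l + l = n by omega] using hmem

lemma isShortcut_removeCycle (h : UnnecessaryCycle F σ k l) :
    IsShortcut F σ (removeCycle σ k l) := by
  refine ⟨fun j => if j ≤ k then j else j + l, by simp, fun j => (apply_ite σ _ _ _).symm,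
    fun j n => ?_⟩
  by_cases hjk : j ≤ k
  · simp only [if_pos hjk]
    by_cases hjnk : j + n ≤ k
    · exact (visitPrefix_congr fun m hm => by simp [removeCycle, hm.trans hjnk]).ge
    · rw [visitPrefix_removeCycle h (by omega)]
      exact visitPrefix_mono F σ (by omega)
  · simp only [if_neg hjk]
    rw [visitPrefix_removeCycle h (by omega), show j + l + n = j + n + l by omega]

end RemoveCycle

section WindCycle

variable {σ : ℕ → V} {k l : ℕ}

lemma windCycle_of_lt {j : ℕ} (hj : j < k + l) : windCycle σ k l j = σ j := by
  unfold windCycle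
  split_ifs with hjk
  · rfl
  · rw [Nat.mod_eq_of_lt (by omega), Nat.add_sub_cancel' (by omega)]

lemma windCycle_add_period {j : ℕ} (hkj : k ≤ j) :
    windCycle σ k l (j + l) = windCycle σ k l j := by
  simp [windCycle, show ¬ j + l < k by omega, show ¬ j < k by omega,
    show j + l - k = j - k + l by omega]

lemma isLasso_windCycle (hl : 0 < l) {L : ℕ} (hL : k + l ≤ L) : IsLasso (windCycle σ k l) L :=
  ⟨k, l, hl, hL, fun _ => windCycle_add_period⟩

lemma isPlay_windCycle {A : Arena V} (hσ : IsPlay A σ) (hl : 0 < l) (hkl : σ (k + l) = σ k) :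
    IsPlay A (windCycle σ k l) := by
  intro j
  induction j using Nat.strong_induction_on with
  | _ j ih =>
    by_cases hj : j + 1 < k + l
    · rw [windCycle_of_lt hj, windCycle_of_lt (by omega)]
      exact hσ j
    by_cases hjl : j + 1 = k + l
    · rw [windCycle_of_lt (j := j) (by omega), hjl, windCycle_add_period le_rfl,
        windCycle_of_lt (j := k) (by omega), ← hkl, ← hjl]
      exact hσ j
    · obtain ⟨j', rfl⟩ : ∃ j', j = j' + l := ⟨j - l, by omega⟩
      rw [windCycle_add_period (by omega), show j' + l + 1 = j' + 1 + l by omega,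
        windCycle_add_period (by omega)]
      exact ih j' (by omega)

lemma isShortcut_windCycle (F : P → Set V) (hl : 0 < l) (hk : visit F σ ⊆ visitPrefix F σ k) :
    IsShortcut F σ (windCycle σ k l) := by
  refine ⟨fun j => if j < k then j else k + (j - k) % l, by simp,
    fun j => (apply_ite σ _ _ _).symm, fun j n => ?_⟩
  by_cases hjn : j + n < k
  · simp only [if_pos (show j < k by omega)]
    exact (visitPrefix_congr fun m hm => windCycle_of_lt (by omega)).ge
  · calc visitPrefix F σ _ ⊆ visit F σ := visitPrefix_subset_visit F σ _
      _ ⊆ visitPrefix F σ k := hk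
      _ = visitPrefix F (windCycle σ k l) k :=
        (visitPrefix_congr fun m hm => windCycle_of_lt (by omega)).symm
      _ ⊆ visitPrefix F (windCycle σ k l) (j + n) := visitPrefix_mono F _ (by omega)

end WindCycle

/-- Take a shortcut `σ` of `ρ` with least horizon `M`: an unnecessary cycle closing by time `M`
could be removed, giving a shortcut with horizon `M - l`. -/
lemma exists_isShortcut_horizon_lt_unnecessaryCycle [Finite P] {A : Arena V} (F : P → Set V)
    {ρ : ℕ → V} (hρ : IsPlay A ρ) :
    ∃ σ M, IsPlay A σ ∧ IsShortcut F ρ σ ∧ visit F σ ⊆ visitPrefix F σ M ∧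
      ∀ k l, UnnecessaryCycle F σ k l → M < k + l := by
  have hex : ∃ M σ, IsPlay A σ ∧ IsShortcut F ρ σ ∧ visit F σ ⊆ visitPrefix F σ M :=
    let ⟨M, hM⟩ := exists_visit_subset_visitPrefix F ρ
    ⟨M, ρ, hρ, .refl F ρ, hM⟩
  obtain ⟨σ, hσ, hρσ, hM⟩ := Nat.find_spec hex
  refine ⟨σ, Nat.find hex, hσ, hρσ, hM, fun k l hcyc => ?_⟩
  by_contra! hle
  have hshort := isShortcut_removeCycle hcyc
  refine Nat.find_min hex (show Nat.find hex - l < Nat.find hex by have := hcyc.1; omega)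
    ⟨removeCycle σ k l, isPlay_removeCycle hσ hcyc.2.1, hρσ.trans hshort, ?_⟩
  rw [hshort.visit_eq, visitPrefix_removeCycle hcyc (by omega), Nat.sub_add_cancel (by omega)]
  exact hM

/-- every play can be turned into a lasso of length at most
`(|Π|+1)·|V|` with the same set of visiting players, preserving
`λ`-consistency. -/
theorem stmt11 {V P : Type} [Fintype V] [Fintype P] (G : Game P V) (ρ : ℕ → V)
    (hρ : IsPlay G.toArena ρ) :
    ∃ ρ' : ℕ → V, IsPlay G.toArena ρ' ∧ ρ' 0 = ρ 0 ∧
      IsLasso ρ' ((Fintype.card P + 1) * Fintype.card V) ∧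
      visit G.F ρ' = visit G.F ρ ∧
      ∀ lam : V → ℕ∞, lambdaConsistent G lam ρ → lambdaConsistent G lam ρ' := by
  obtain ⟨σ, M, hσ, hρσ, hM, hlate⟩ := exists_isShortcut_horizon_lt_unnecessaryCycle G.F hρ
  obtain ⟨k, l, hkl, hcyc⟩ := exists_unnecessaryCycle_le G.F σ
  have hk : visit G.F σ ⊆ visitPrefix G.F σ k :=
    hcyc.2.2 ▸ hM.trans (visitPrefix_mono G.F σ (hlate k l hcyc).le)
  have hτ := hρσ.trans (isShortcut_windCycle G.F hcyc.1 hk)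
  exact ⟨windCycle σ k l, isPlay_windCycle hσ hcyc.1 hcyc.2.1.symm, hτ.apply_zero,
    isLasso_windCycle hcyc.1 hkl, hτ.visit_eq, fun _ => hτ.lambdaConsistent⟩
end
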